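/- Let V be a finite-dimensional real vector space, U : V^3 → ℝ trilinear and w : V → ℝ linear. If ξ_{−1}·U = U, then for all a,b,c,d ∈ V: (1/12)·(y_t*(U⊗w))(a,b,c,d) = (1/4)·(U(b,c,d)w(a) − U(a,c,d)w(b) − U(d,b,a)w(c) + U(c,b,a)w(d)). If ξ_2·U = U, then for all a,b,c,d ∈ V: (1/12)·(y_t*(U⊗w))(a,b,c,d) = (1/4)·(U(d,c,b)w(a) − U(d,c,a)w(b) − U(a,b,d)w(c) + U(a,b,c)w(d)). -/

import Mathlib

/-- Action of a group ring element `a ∈ ℝ[S_r]` on an `r`-multilinear map: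
`(aT)(v₁,…,v_r) = Σ_p a(p)·T(v_{p(1)},…,v_{p(r)})`. -/
noncomputable def gact {V : Type} [AddCommGroup V] [Module ℝ V] {r : ℕ}
    (a : MonoidAlgebra ℝ (Equiv.Perm (Fin r)))
    (T : MultilinearMap ℝ (fun _ : Fin r => V) ℝ) :
    MultilinearMap ℝ (fun _ : Fin r => V) ℝ :=
  ∑ p : Equiv.Perm (Fin r), a.coeff p • T.domDomCongr p
/-- Pointwise action of a group ring element `a ∈ ℝ[S_r]` on a function
`T : V^r → ℝ`: `(aT)(v₁,…,v_r) = Σ_p a(p)·T(v_{p(1)},…,v_{p(r)})`. -/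
noncomputable def fact {V : Type} [AddCommGroup V] [Module ℝ V] {r : ℕ}
    (a : MonoidAlgebra ℝ (Equiv.Perm (Fin r)))
    (T : (Fin r → V) → ℝ) : (Fin r → V) → ℝ :=
  fun v => ∑ p : Equiv.Perm (Fin r), a.coeff p * T (fun i => v (p i))
/-- The star map `a* := Σ_p a(p)·p⁻¹` on the group ring `ℝ[S_r]`. -/
noncomputable def astar {r : ℕ} (a : MonoidAlgebra ℝ (Equiv.Perm (Fin r))) :
    MonoidAlgebra ℝ (Equiv.Perm (Fin r)) :=
  MonoidAlgebra.ofCoeff (Finsupp.equivFunOnFinite.symm (fun p => a.coeff p⁻¹))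
/-- The Young symmetrizer `y_t = Σ_{p∈H_t} Σ_{q∈V_t} sign(q)·(p∘q)` of the tableau with
rows `{1,3}`, `{2,4}` (indices `0`-based in `Fin 4`):
`H_t = {id, (1 3), (2 4), (1 3)(2 4)}`, `V_t = {id, (1 2), (3 4), (1 2)(3 4)}`. -/
noncomputable def yt : MonoidAlgebra ℝ (Equiv.Perm (Fin 4)) :=
  (MonoidAlgebra.single 1 1 + MonoidAlgebra.single (Equiv.swap 0 2) 1 +
     MonoidAlgebra.single (Equiv.swap 1 3) 1 +
     MonoidAlgebra.single (Equiv.swap 0 2 * Equiv.swap 1 3) 1) *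
  (MonoidAlgebra.single 1 1 - MonoidAlgebra.single (Equiv.swap 0 1) 1 -
     MonoidAlgebra.single (Equiv.swap 2 3) 1 +
     MonoidAlgebra.single (Equiv.swap 0 1 * Equiv.swap 2 3) 1)
/-- `ξ_ν := (1/3)(id + ν·(2 3) + (1−ν)·(1 2) − ν·(1 2 3) + (ν−1)·(1 3 2) − (1 3)) ∈ ℝ[S_3]`,
with `0`-based indices in `Fin 3`; `finRotate 3` is the cycle `(1 2 3)`. -/
noncomputable def xi (ν : ℝ) : MonoidAlgebra ℝ (Equiv.Perm (Fin 3)) :=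
  (1/3 : ℝ) • (MonoidAlgebra.single 1 1 + MonoidAlgebra.single (Equiv.swap 1 2) ν +
    MonoidAlgebra.single (Equiv.swap 0 1) (1 - ν) - MonoidAlgebra.single (finRotate 3) ν +
    MonoidAlgebra.single (finRotate 3)⁻¹ (ν - 1) - MonoidAlgebra.single (Equiv.swap 0 2) 1)


/-!
Expanding the sixteen terms of `y_t*`, for arbitrary `U` and `w` the value
`(y_t*(U⊗w))(a,b,c,d)` equals `K(b,c,d)w(a) − K(a,c,d)w(b) − K(d,b,a)w(c) + K(c,b,a)w(d)`
with `K(x,y,z) = U(x,y,z) − U(x,z,y) − U(y,z,x) + U(z,y,x)`. The condition `ξ_ν U = U` is a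
linear system among the six values `U(σ(x,y,z))`: for `ν = −1` it makes `U` antisymmetric in
its last two arguments with vanishing cyclic sum, for `ν = 2` antisymmetric in its first two
with vanishing cyclic sum. In the first case this forces `K(x,y,z) = 3U(x,y,z)`, in the second
`K(x,y,z) = 3U(z,y,x)`.
-/

section GroupRingAction

variable {V : Type} [AddCommGroup V] [Module ℝ V] {r : ℕ}

theorem coe_gact (a : MonoidAlgebra ℝ (Equiv.Perm (Fin r)))
    (T : MultilinearMap ℝ (fun _ : Fin r => V) ℝ) : ⇑(gact a T) = fact a T := by
  ext v
  simp [gact, fact]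

theorem fact_add (a b : MonoidAlgebra ℝ (Equiv.Perm (Fin r))) (T : (Fin r → V) → ℝ) :
    fact (a + b) T = fact a T + fact b T := by
  ext v
  simp [fact, MonoidAlgebra.coeff_add, add_mul, Finset.sum_add_distrib]

theorem fact_sub (a b : MonoidAlgebra ℝ (Equiv.Perm (Fin r))) (T : (Fin r → V) → ℝ) :
    fact (a - b) T = fact a T - fact b T := by
  ext v
  simp [fact, MonoidAlgebra.coeff_sub, sub_mul, Finset.sum_sub_distrib]

theorem fact_smul (s : ℝ) (a : MonoidAlgebra ℝ (Equiv.Perm (Fin r))) (T : (Fin r → V) → ℝ) :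
    fact (s • a) T = s • fact a T := by
  ext v
  simp [fact, Finset.mul_sum, mul_assoc]

theorem fact_single (g : Equiv.Perm (Fin r)) (c : ℝ) (T : (Fin r → V) → ℝ) :
    fact (MonoidAlgebra.single g c) T = fun v => c * T (fun i => v (g i)) := by
  ext v
  simp [fact, MonoidAlgebra.coeff_single, Finsupp.single_apply]

theorem astar_add (a b : MonoidAlgebra ℝ (Equiv.Perm (Fin r))) :
    astar (a + b) = astar a + astar b := by
  ext p
  simp [astar, MonoidAlgebra.coeff_add]

theorem astar_sub (a b : MonoidAlgebra ℝ (Equiv.Perm (Fin r))) :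
    astar (a - b) = astar a - astar b := by
  ext p
  simp [astar, MonoidAlgebra.coeff_sub]

theorem astar_single (g : Equiv.Perm (Fin r)) (c : ℝ) :
    astar (MonoidAlgebra.single g c) = MonoidAlgebra.single g⁻¹ c := by
  ext p
  simp [astar, MonoidAlgebra.coeff_single, Finsupp.single_apply, inv_eq_iff_eq_inv]

end GroupRingAction

section Tableau

variable {V : Type} [AddCommGroup V] [Module ℝ V]

theorem fact_xi_apply (ν : ℝ) (f : (Fin 3 → V) → ℝ) (x y z : V) :
    fact (xi ν) f ![x, y, z] = (1/3 : ℝ) * (f ![x, y, z] + ν * f ![x, z, y] +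
      (1 - ν) * f ![y, x, z] - ν * f ![y, z, x] + (ν - 1) * f ![z, x, y] - f ![z, y, x]) := by
  have eta (v : Fin 3 → V) (g : Equiv.Perm (Fin 3)) :
      (fun i => v (g i)) = ![v (g 0), v (g 1), v (g 2)] := (FinVec.etaExpand_eq _).symm
  simp only [xi, fact_smul, fact_add, fact_sub, fact_single, Pi.add_apply, Pi.sub_apply,
    Pi.smul_apply, smul_eq_mul]
  simp only [eta]
  simp +decide [Equiv.swap_apply_def]

def ytComponent (f : (Fin 3 → V) → ℝ) (x y z : V) : ℝ :=
  f ![x, y, z] - f ![x, z, y] - f ![y, z, x] + f ![z, y, x]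

theorem fact_astar_yt_tensor (f : (Fin 3 → V) → ℝ) (w : V → ℝ) (a b c d : V) :
    fact (astar yt) (fun v => f ![v 0, v 1, v 2] * w (v 3)) ![a, b, c, d] =
      ytComponent f b c d * w a - ytComponent f a c d * w b - ytComponent f d b a * w c +
        ytComponent f c b a * w d := by
  simp only [yt, mul_add, add_mul, mul_sub, MonoidAlgebra.single_mul_single, one_mul,
    mul_one, astar_add, astar_sub, astar_single, fact_add, fact_sub, fact_single, Pi.add_apply,
    Pi.sub_apply]
  simp +decide [Equiv.swap_apply_def, ytComponent]
  ring

theorem ytComponent_eq_of_fact_xi_neg_one {f : (Fin 3 → V) → ℝ} (h : fact (xi (-1)) f = f)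
    (x y z : V) : ytComponent f x y z = 3 * f ![x, y, z] := by
  have H (x y z : V) := (fact_xi_apply (-1) f x y z).symm.trans (congrFun h ![x, y, z])
  unfold ytComponent
  linear_combination H x y z + 2 * H y z x

theorem ytComponent_eq_of_fact_xi_two {f : (Fin 3 → V) → ℝ} (h : fact (xi 2) f = f)
    (x y z : V) : ytComponent f x y z = 3 * f ![z, y, x] := by
  have H (x y z : V) := (fact_xi_apply 2 f x y z).symm.trans (congrFun h ![x, y, z])
  unfold ytComponent
  linear_combination H x y z + 3 * H x z y - H y z x

end Tableau

theorem stmt_18_general (V : Type) [AddCommGroup V] [Module ℝ V]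
    (U : MultilinearMap ℝ (fun _ : Fin 3 => V) ℝ) (w : V →ₗ[ℝ] ℝ) :
    (gact (xi (-1)) U = U →
      ∀ a b c d : V,
        (1/12 : ℝ) *
            fact (astar yt) (fun v' => U ![v' 0, v' 1, v' 2] * w (v' 3)) ![a, b, c, d] =
          (1/4 : ℝ) * (U ![b, c, d] * w a - U ![a, c, d] * w b -
            U ![d, b, a] * w c + U ![c, b, a] * w d)) ∧
    (gact (xi 2) U = U →
      ∀ a b c d : V,
        (1/12 : ℝ) *
            fact (astar yt) (fun v' => U ![v' 0, v' 1, v' 2] * w (v' 3)) ![a, b, c, d] =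
          (1/4 : ℝ) * (U ![d, c, b] * w a - U ![d, c, a] * w b -
            U ![a, b, d] * w c + U ![a, b, c] * w d)) := by
  refine ⟨fun h a b c d => ?_, fun h a b c d => ?_⟩
  · have hU := ytComponent_eq_of_fact_xi_neg_one (f := U) (by rw [← coe_gact, h])
    rw [fact_astar_yt_tensor, hU, hU, hU, hU]
    ring
  · have hU := ytComponent_eq_of_fact_xi_two (f := U) (by rw [← coe_gact, h])
    rw [fact_astar_yt_tensor, hU, hU, hU, hU]
    ring

/-- For trilinear `U` and linear `w`: if `ξ_{−1}·U = U` then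
`(1/12)·(y_t*(U⊗w))(a,b,c,d)
  = (1/4)(U(b,c,d)w(a) − U(a,c,d)w(b) − U(d,b,a)w(c) + U(c,b,a)w(d))`;
if `ξ_2·U = U` then `(1/12)·(y_t*(U⊗w))(a,b,c,d)
  = (1/4)(U(d,c,b)w(a) − U(d,c,a)w(b) − U(a,b,d)w(c) + U(a,b,c)w(d))`. -/
theorem stmt_18 (V : Type) [AddCommGroup V] [Module ℝ V] [FiniteDimensional ℝ V]
    (U : MultilinearMap ℝ (fun _ : Fin 3 => V) ℝ) (w : V →ₗ[ℝ] ℝ) :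
    (gact (xi (-1)) U = U →
      ∀ a b c d : V,
        (1/12 : ℝ) *
            fact (astar yt) (fun v' => U ![v' 0, v' 1, v' 2] * w (v' 3)) ![a, b, c, d] =
          (1/4 : ℝ) * (U ![b, c, d] * w a - U ![a, c, d] * w b -
            U ![d, b, a] * w c + U ![c, b, a] * w d)) ∧
    (gact (xi 2) U = U →
      ∀ a b c d : V,
        (1/12 : ℝ) *
            fact (astar yt) (fun v' => U ![v' 0, v' 1, v' 2] * w (v' 3)) ![a, b, c, d] =
          (1/4 : ℝ) * (U ![d, c, b] * w a - U ![d, c, a] * w b -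
            U ![a, b, d] * w c + U ![a, b, c] * w d)) :=
  stmt_18_general V U w
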